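/- Let A₀' = (E₃+F₃)/2 be the midpoint of E₃F₃, D₀ = (B+C)/2 the midpoint of BC, and A₃ = T_P(D₃). Then the four lines A₀'P', D₀Q, D₃Q', and A₃P are concurrent at the point λ(A) = T_{P'}(T_P⁻¹(A)): that is, the point Z₀' := T_{P'}(T_P⁻¹(A)) is collinear with each of the pairs (A₀', P'), (D₀, Q), (D₃, Q'), and (A₃, P). -/

import Mathlib

noncomputable section

abbrev Pt := EuclideanSpace ℝ (Fin 2)

/-!
In barycentric coordinates with respect to `ABC`, `T_P` sends the weights `(x, y, z)` to
`x D + y E + z F`. Solving `T_P X = A` gives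
`T_P⁻¹(A) = (-(β + γ), γ + α, α + β) / (2α)`, and applying `T_{P'}` yields
`λ(A) = (β + γ, α - γ, α - β) / (2α)`. With these coordinates each of the four lines is seen to
pass through `λ(A)` at an explicit affine parameter, e.g. `λ(A) = D₃ + α⁻¹ (Q' - D₃)`.
-/

theorem AffineMap.map_smul_add_smul_add_smul {k V W : Type*} [Ring k] [AddCommGroup V]
    [Module k V] [AddCommGroup W] [Module k W] (f : V →ᵃ[k] W) {x y z : k}
    (h : x + y + z = 1) (a b c : V) :
    f (x • a + y • b + z • c) = x • f a + y • f b + z • f c := by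
  have hf0 : f 0 = (x + y + z) • f 0 := by rw [h, one_smul]
  rw [f.decomp]
  simp only [Pi.add_apply, map_add, map_smul, smul_add]
  conv_lhs => rw [hf0]
  simp only [add_smul]
  abel

theorem collinear_of_eq_lineMap {k V : Type*} [Field k] [AddCommGroup V] [Module k V]
    {z x y : V} (t : k) (h : z = AffineMap.lineMap x y t) : Collinear k {z, x, y} :=
  collinear_insert_of_mem_affineSpan_pair (h ▸ AffineMap.lineMap_mem_affineSpan_pair t x y)

section CevianTriangle

variable {V : Type*} [AddCommGroup V] [Module ℝ V] {A B C : V} {α β γ : ℝ}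

theorem AffineEquiv.symm_apply_eq_of_cevianTriangle (hα : α ≠ 0) (hβγ : β + γ ≠ 0)
    (hγα : γ + α ≠ 0) (hαβ : α + β ≠ 0) (T : V ≃ᵃ[ℝ] V)
    (hA : T A = (β + γ)⁻¹ • (β • B + γ • C)) (hB : T B = (γ + α)⁻¹ • (α • A + γ • C))
    (hC : T C = (α + β)⁻¹ • (α • A + β • B)) :
    T.symm A = (-(β + γ) / (2 * α)) • A + ((γ + α) / (2 * α)) • B + ((α + β) / (2 * α)) • C := by
  rw [T.symm_apply_eq, ← T.coe_toAffineMap,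
    AffineMap.map_smul_add_smul_add_smul _ (by field_simp; ring), T.coe_toAffineMap, hA, hB, hC]
  match_scalars <;> field_simp <;> ring

theorem AffineEquiv.apply_symm_apply_eq_of_cevianTriangles (hα : α ≠ 0) (hβγ : β + γ ≠ 0)
    (hγα : γ + α ≠ 0) (hαβ : α + β ≠ 0) (T T' : V ≃ᵃ[ℝ] V)
    (hA : T A = (β + γ)⁻¹ • (β • B + γ • C)) (hB : T B = (γ + α)⁻¹ • (α • A + γ • C))
    (hC : T C = (α + β)⁻¹ • (α • A + β • B))
    (hA' : T' A = (β + γ)⁻¹ • (γ • B + β • C)) (hB' : T' B = (γ + α)⁻¹ • (γ • A + α • C))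
    (hC' : T' C = (α + β)⁻¹ • (β • A + α • B)) :
    T' (T.symm A) = ((β + γ) / (2 * α)) • A + ((α - γ) / (2 * α)) • B + ((α - β) / (2 * α)) • C := by
  rw [T.symm_apply_eq_of_cevianTriangle hα hβγ hγα hαβ hA hB hC, ← T'.coe_toAffineMap,
    AffineMap.map_smul_add_smul_add_smul _ (by field_simp; ring), T'.coe_toAffineMap, hA', hB', hC']
  match_scalars <;> field_simp <;> ring

end CevianTriangle

theorem stmt15_general
    (A B C : Pt)
    (α β γ : ℝ) (hsum : α + β + γ = 1)
    (hα : α ≠ 0) (hβ : β ≠ 0) (hγ : γ ≠ 0)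
    (hβγ : β + γ ≠ 0) (hγα : γ + α ≠ 0) (hαβ : α + β ≠ 0)
    (hs : α * β + β * γ + γ * α ≠ 0)
    (G : Pt) (hG : G = (3:ℝ)⁻¹ • (A + B + C))
    (P : Pt) (hP : P = α • A + β • B + γ • C)
    (P' : Pt)
    (hP'' : P' = (α * β + β * γ + γ * α)⁻¹ • ((β * γ) • A + (γ * α) • B + (α * β) • C))
    (Q : Pt) (hQ : Q = G - (2:ℝ)⁻¹ • (P' - G))
    (Q' : Pt) (hQ' : Q' = G - (2:ℝ)⁻¹ • (P - G))
    (D E F : Pt)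
    (hD : D = (β + γ)⁻¹ • (β • B + γ • C))
    (hE : E = (γ + α)⁻¹ • (α • A + γ • C))
    (hF : F = (α + β)⁻¹ • (α • A + β • B))
    (D₃ E₃ F₃ : Pt)
    (hD₃ : D₃ = (β + γ)⁻¹ • (γ • B + β • C))
    (hE₃ : E₃ = (γ + α)⁻¹ • (γ • A + α • C))
    (hF₃ : F₃ = (α + β)⁻¹ • (β • A + α • B))
    (TP : Pt ≃ᵃ[ℝ] Pt) (hTPA : TP A = D) (hTPB : TP B = E) (hTPC : TP C = F)
    (TP' : Pt ≃ᵃ[ℝ] Pt) (hTP'A : TP' A = D₃) (hTP'B : TP' B = E₃) (hTP'C : TP' C = F₃)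

    (A₀' : Pt) (hA₀' : A₀' = midpoint ℝ E₃ F₃)
    (D₀ : Pt) (hD₀ : D₀ = midpoint ℝ B C)
    (A₃ : Pt) (hA₃ : A₃ = TP D₃) :
    Collinear ℝ ({TP' (TP.symm A), A₀', P'} : Set Pt) ∧
    Collinear ℝ ({TP' (TP.symm A), D₀, Q} : Set Pt) ∧
    Collinear ℝ ({TP' (TP.symm A), D₃, Q'} : Set Pt) ∧
    Collinear ℝ ({TP' (TP.symm A), A₃, P} : Set Pt) := by
  subst hD hE hF hD₃ hE₃ hF₃ hG hP hP'' hQ hQ' hA₀' hD₀ hA₃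
  have hD₃ : (β + γ)⁻¹ • (γ • B + β • C) = AffineMap.lineMap B C (β / (β + γ)) := by
    rw [AffineMap.lineMap_apply_module, one_sub_div hβγ, add_sub_cancel_left, smul_add, smul_smul,
      smul_smul, div_eq_inv_mul, div_eq_inv_mul]
  rw [TP.apply_symm_apply_eq_of_cevianTriangles hα hβγ hγα hαβ TP' hTPA hTPB hTPC hTP'A hTP'B hTP'C,
    hD₃, TP.apply_lineMap, hTPB, hTPC]
  refine ⟨collinear_of_eq_lineMap (-(α * β + β * γ + γ * α) / α ^ 2) ?_,
    collinear_of_eq_lineMap ((α * β + β * γ + γ * α) / α ^ 2) ?_,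
    collinear_of_eq_lineMap α⁻¹ ?_,
    collinear_of_eq_lineMap
      (((α - γ) * (β + γ) * (α + β) - 2 * α * β ^ 2) / (2 * α ^ 2 * β * γ)) ?_⟩
  all_goals
    obtain rfl : γ = 1 - α - β := by linarith
    -- `field_simp` only recognises `s ≠ 0` in the normal form it gives `s` after substituting `γ`
    replace hs : β * (α + (1 - α - β)) + α * (1 - α - β) ≠ 0 := by
      contrapose! hs; linear_combination hs
    simp only [AffineMap.lineMap_apply_module, midpoint_eq_smul_add, invOf_eq_inv]
    match_scalars <;> field_simp <;> ring

theorem stmt15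
    (A B C : Pt) (hABC : AffineIndependent ℝ ![A, B, C])
    (α β γ : ℝ) (hsum : α + β + γ = 1)
    (hα : α ≠ 0) (hβ : β ≠ 0) (hγ : γ ≠ 0)
    (hβγ : β + γ ≠ 0) (hγα : γ + α ≠ 0) (hαβ : α + β ≠ 0)
    (hab : α ≠ β) (hbc : β ≠ γ) (hca : γ ≠ α)
    (hs : α * β + β * γ + γ * α ≠ 0)
    (G : Pt) (hG : G = (3:ℝ)⁻¹ • (A + B + C))
    (P : Pt) (hP : P = α • A + β • B + γ • C)
    (P' : Pt)
    (hP'' : P' = (α * β + β * γ + γ * α)⁻¹ • ((β * γ) • A + (γ * α) • B + (α * β) • C))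
    (Q : Pt) (hQ : Q = G - (2:ℝ)⁻¹ • (P' - G))
    (Q' : Pt) (hQ' : Q' = G - (2:ℝ)⁻¹ • (P - G))
    (D E F : Pt)
    (hD : D = (β + γ)⁻¹ • (β • B + γ • C))
    (hE : E = (γ + α)⁻¹ • (α • A + γ • C))
    (hF : F = (α + β)⁻¹ • (α • A + β • B))
    (D₃ E₃ F₃ : Pt)
    (hD₃ : D₃ = (β + γ)⁻¹ • (γ • B + β • C))
    (hE₃ : E₃ = (γ + α)⁻¹ • (γ • A + α • C))
    (hF₃ : F₃ = (α + β)⁻¹ • (β • A + α • B))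
    (TP : Pt ≃ᵃ[ℝ] Pt) (hTPA : TP A = D) (hTPB : TP B = E) (hTPC : TP C = F)
    (TP' : Pt ≃ᵃ[ℝ] Pt) (hTP'A : TP' A = D₃) (hTP'B : TP' B = E₃) (hTP'C : TP' C = F₃)

    (A₀' : Pt) (hA₀' : A₀' = midpoint ℝ E₃ F₃)
    (D₀ : Pt) (hD₀ : D₀ = midpoint ℝ B C)
    (A₃ : Pt) (hA₃ : A₃ = TP D₃) :
    Collinear ℝ ({TP' (TP.symm A), A₀', P'} : Set Pt) ∧
    Collinear ℝ ({TP' (TP.symm A), D₀, Q} : Set Pt) ∧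
    Collinear ℝ ({TP' (TP.symm A), D₃, Q'} : Set Pt) ∧
    Collinear ℝ ({TP' (TP.symm A), A₃, P} : Set Pt) :=
  stmt15_general A B C α β γ hsum hα hβ hγ hβγ hγα hαβ hs G hG P hP P' hP'' Q hQ Q' hQ' D E F hD hE
    hF D₃ E₃ F₃ hD₃ hE₃ hF₃ TP hTPA hTPB hTPC TP' hTP'A hTP'B hTP'C A₀' hA₀' D₀ hD₀ A₃ hA₃
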